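/- Let G be a hyperbolic random graph on n vertices with parameters α ∈ (1/2,1) and C ∈ ℝ, and fix τ > 0. Let I be any fixed angular interval consisting of at most w = e^{γ(n,τ)}·log^{(3)}(n) consecutive sectors of the sector decomposition. Then for every integer k > τ·log^{(2)}(n) and all sufficiently large n, the probability that exactly k of the n sampled points have angular coordinate in I is at most e^{−k/18}. -/

import Mathlib

open MeasureTheory ProbabilityTheory Filter Real Asymptotics

/-- Twice iterated natural logarithm. -/
noncomputable def loglog (n : ℕ) : ℝ := Real.log (Real.log n)

/-- Thrice iterated natural logarithm. -/
noncomputable def logloglog (n : ℕ) : ℝ := Real.log (Real.log (Real.log n))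

/-- `γ(n, τ) = log(τ·log^{(2)}(n) / (2·(log^{(3)}(n))²))`. -/
noncomputable def gam (n : ℕ) (τ : ℝ) : ℝ :=
  Real.log (τ * loglog n / (2 * (logloglog n) ^ 2))

/-- The radius `R = 2·log n + C` of the hyperbolic disk. -/
noncomputable def bigR (C : ℝ) (n : ℕ) : ℝ := 2 * Real.log n + C

/-- The threshold radius `ρ(n) = R − log((π/2)·e^{C/2}·γ(n,τ))`. -/
noncomputable def rho (C τ : ℝ) (n : ℕ) : ℝ :=
  bigR C n - Real.log (Real.pi / 2 * Real.exp (C / 2) * gam n τ)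

/-- `θ_n`, the maximal angular distance at which two points of radius `ρ(n)` are
adjacent in the hyperbolic disk of radius `R`. -/
noncomputable def theta (C τ : ℝ) (n : ℕ) : ℝ :=
  Real.arccos ((Real.cosh (rho C τ n) ^ 2 - Real.cosh (bigR C n)) /
    Real.sinh (rho C τ n) ^ 2)

/-- The number of sectors of angular width `θ_n` in the disk. -/
noncomputable def nSec (C τ : ℝ) (n : ℕ) : ℕ := ⌊2 * Real.pi / theta C τ n⌋₊

/-- The threshold `w = e^{γ(n,τ)}·log^{(3)}(n)` distinguishing narrow and wide runs. -/
noncomputable def wThr (n : ℕ) (τ : ℝ) : ℝ := Real.exp (gam n τ) * logloglog n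

/-- The index of the sector (among `n'` equal sectors of the disk) containing the
angle `φ`. -/
noncomputable def sectorIdx (n' : ℕ) (φ : ℝ) : ZMod n' :=
  ((⌊φ * n' / (2 * Real.pi)⌋ : ℤ) : ZMod n')

/-- `occupancy n' angles k` is `true` iff sector `k` contains the angular coordinate of
at least one of the points. -/
noncomputable def occupancy {n : ℕ} (n' : ℕ) (angles : Fin n → ℝ) (k : ZMod n') : Bool :=
  @decide (∃ i, sectorIdx n' (angles i) = k) (Classical.propDecidable _)

/-- The length of the maximal circular run of `true`s of `s` containing the index `i`;
`0` if `s i = false`. -/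
noncomputable def runLen {n' : ℕ} (s : ZMod n' → Bool) (i : ZMod n') : ℕ :=
  sSup {k : ℕ | k ≤ n' ∧ ∃ j : ZMod n',
    (∀ m : ℕ, m < k → s (j + (m : ZMod n')) = true) ∧
    ∃ t : ℕ, t < k ∧ i = j + (t : ZMod n')}

/-- The number of indices lying in a success run of length greater than `w`. -/
noncomputable def runSumGT {n' : ℕ} (w : ℝ) (s : ZMod n' → Bool) : ℕ :=
  Nat.card {i : ZMod n' | w < (runLen s i : ℝ)}

/-- The probability density of a point (angle, radius) of a hyperbolic random graph
with parameters `α` and disk radius `R`. -/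
noncomputable def hrgPDF (α R : ℝ) (p : ℝ × ℝ) : ℝ :=
  if 0 ≤ p.1 ∧ p.1 < 2 * Real.pi ∧ 0 ≤ p.2 ∧ p.2 ≤ R then
    (1 / (2 * Real.pi)) * (α * Real.sinh (α * p.2) / (Real.cosh (α * R) - 1))
  else 0

/-- The distribution of a single point (angle, radius) of a hyperbolic random graph. -/
noncomputable def hrgMeasure (α R : ℝ) : Measure (ℝ × ℝ) :=
  volume.withDensity fun p => ENNReal.ofReal (hrgPDF α R p)

/-- `pts` is a sample of a hyperbolic random graph on `n` vertices with parameters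
`α` and `C`: the points (angle, radius) are independent, each with the hyperbolic
density on the disk of radius `R = 2 log n + C`. -/
structure IsHRG (α C : ℝ) (n : ℕ) {Ω : Type*} [MeasurableSpace Ω] (μ : Measure Ω)
    (pts : Fin n → Ω → ℝ × ℝ) : Prop where
  meas : ∀ i, Measurable (pts i)
  indep : iIndepFun pts μ
  law : ∀ i, Measure.map (pts i) μ = hrgMeasure α (bigR C n)

/-- The number of sampled points whose angular coordinate lies in the angular interval
formed by the `ℓ` consecutive sectors `j, j+1, …, j+ℓ−1`. -/
noncomputable def ptsInWindow {n : ℕ} (n' : ℕ) (angles : Fin n → ℝ)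
    (j : ZMod n') (ℓ : ℕ) : ℕ :=
  Nat.card {i : Fin n | ∃ t : ℕ, t < ℓ ∧ sectorIdx n' (angles i) = j + (t : ZMod n')}

/-!
The number of points in a window of `ℓ` sectors is a sum of `n` independent indicators, each of
mean at most `p = ℓ / n'` because the angular coordinate is uniform. A union bound over `k`-subsets
gives `P(count ≥ k) ≤ C(n,k) pᵏ ≤ (e n p / k)ᵏ`. Asymptotically `θ_n ≈ π γ / n`, so `n' ≈ 2 n / γ`
and `n p ≤ (3/5) w γ ≤ (3/10) τ log⁽²⁾ n < k / 3`; since `e / 3 < e^{-1/18}` the bound follows.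
-/

open scoped ENNReal

theorem choose_mul_pow_le_exp_neg {n k : ℕ} {p : ℝ} (hp : 0 ≤ p) (hnp : n * p ≤ k / 3) :
    n.choose k * p ^ k ≤ exp (-k / 18) := by
  have hk : (k : ℝ) ^ k / k.factorial ≤ exp 1 ^ k := by
    rw [← exp_nat_mul, mul_one]; exact pow_div_factorial_le_exp _ k.cast_nonneg k
  have he : exp 1 / 3 ≤ exp (-(1 / 18)) := by
    linarith [add_one_le_exp (-(1 / 18)), exp_one_lt_d9]
  calc n.choose k * p ^ k ≤ (n : ℝ) ^ k / k.factorial * p ^ k := by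
        gcongr; exact Nat.choose_le_pow_div k n
    _ = (n * p) ^ k / k.factorial := by ring
    _ ≤ (k / 3) ^ k / k.factorial := by gcongr
    _ = (1 / 3) ^ k * (k ^ k / k.factorial) := by ring
    _ ≤ (1 / 3) ^ k * exp 1 ^ k := by gcongr
    _ ≤ exp (-(1 / 18)) ^ k := by rw [← mul_pow, one_div_mul_eq_div]; gcongr
    _ = exp (-k / 18) := by rw [← exp_nat_mul]; ring_nf

theorem measure_le_card_le_choose_mul_pow {Ω ι β : Type*} [MeasurableSpace Ω]
    [MeasurableSpace β] [Fintype ι] {μ : Measure Ω} {f : ι → Ω → β} (hf : iIndepFun f μ)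
    {B : Set β} (hB : MeasurableSet B) {q : ℝ≥0∞} (hq : ∀ i, μ (f i ⁻¹' B) ≤ q) (k : ℕ) :
    μ {ω | k ≤ Nat.card {i | f i ω ∈ B}} ≤ (Fintype.card ι).choose k * q ^ k := by
  classical
  have hcover : {ω | k ≤ Nat.card {i | f i ω ∈ B}} ⊆
      ⋃ S ∈ Finset.powersetCard k Finset.univ, ⋂ i ∈ S, f i ⁻¹' B := by
    intro ω hω
    rw [Set.mem_ofPred_eq, Nat.card_eq_fintype_card, Fintype.card_subtype] at hω
    obtain ⟨S, hS, hcard⟩ := Finset.exists_subset_card_eq hω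
    simp only [Set.mem_iUnion, Set.mem_iInter]
    exact ⟨S, Finset.mem_powersetCard.2 ⟨S.subset_univ, hcard⟩,
      fun i hi => (Finset.mem_filter.1 (hS hi)).2⟩
  calc μ {ω | k ≤ Nat.card {i | f i ω ∈ B}}
      ≤ ∑ S ∈ Finset.powersetCard k Finset.univ, μ (⋂ i ∈ S, f i ⁻¹' B) :=
        (measure_mono hcover).trans (measure_biUnion_finset_le _ _)
    _ ≤ ∑ S ∈ Finset.powersetCard k (Finset.univ : Finset ι), q ^ k := by
        refine Finset.sum_le_sum fun S hS => ?_
        rw [hf.measure_inter_preimage_eq_mul S fun _ _ => hB,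
          ← (Finset.mem_powersetCard.1 hS).2, ← Finset.prod_const]
        exact Finset.prod_le_prod' fun i _ => hq i
    _ = (Fintype.card ι).choose k * q ^ k := by
        rw [Finset.sum_const, Finset.card_powersetCard, Finset.card_univ, nsmul_eq_mul]

theorem measurableSet_sectorIdx_eq (n' : ℕ) (c : ZMod n') :
    MeasurableSet {φ : ℝ | sectorIdx n' φ = c} :=
  (Int.measurable_floor.comp (by fun_prop))
    (MeasurableSet.of_discrete (s := {z : ℤ | (z : ZMod n') = c}))

theorem setOf_sectorIdx_eq_inter_Ico_subset {n' : ℕ} [NeZero n'] (c : ZMod n') :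
    {φ : ℝ | sectorIdx n' φ = c} ∩ Set.Ico 0 (2 * π) ⊆
      Set.Ico (2 * π * c.val / n') (2 * π * c.val / n' + 2 * π / n') := by
  rintro φ ⟨hc, hφ0, hφ2π⟩
  have hπ : 0 < 2 * π := by positivity
  have hn' : (0 : ℝ) < n' := by exact_mod_cast Nat.pos_of_neZero n'
  set x := φ * n' / (2 * π)
  have hx0 : 0 ≤ x := by positivity
  have hxn : x < n' := by
    rw [div_lt_iff₀ hπ]; nlinarith
  have hfloor : (c.val : ℤ) = ⌊x⌋ := by
    rw [← hc, sectorIdx, ZMod.val_intCast,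
      Int.emod_eq_of_lt (Int.floor_nonneg.2 hx0) (Int.floor_lt.2 (by exact_mod_cast hxn))]
  have hlo : (c.val : ℝ) ≤ x := by exact_mod_cast hfloor ▸ Int.floor_le x
  have hhi : x < c.val + 1 := by exact_mod_cast hfloor ▸ Int.lt_floor_add_one x
  constructor
  · rw [div_le_iff₀ hn']; rw [le_div_iff₀ hπ] at hlo; linarith
  · rw [← add_div, lt_div_iff₀ hn']; rw [div_lt_iff₀ hπ] at hhi; linarith

theorem lintegral_radial_density {α R : ℝ} (hα : 0 < α) (hR : 0 < R) :
    ∫⁻ r in Set.Icc 0 R, ENNReal.ofReal (α * sinh (α * r) / (cosh (α * R) - 1)) = 1 := by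
  have hD : 0 < cosh (α * R) - 1 := sub_pos.2 (one_lt_cosh.2 (by positivity))
  have hderiv : ∀ r ∈ Set.uIcc 0 R,
      HasDerivAt (fun r => cosh (α * r)) (α * sinh (α * r)) r := fun r _ => by
    simpa [mul_comm] using ((hasDerivAt_id r).const_mul α).cosh
  have hcont : Continuous fun r => α * sinh (α * r) := by fun_prop
  have hnonneg : ∀ r ∈ Set.Icc 0 R, 0 ≤ α * sinh (α * r) / (cosh (α * R) - 1) :=
    fun r hr => div_nonneg (mul_nonneg hα.le (sinh_nonneg_iff.2 (by nlinarith [hr.1]))) hD.le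
  rw [← ofReal_integral_eq_lintegral_ofReal (hcont.div_const _).integrableOn_Icc
      ((ae_restrict_iff' measurableSet_Icc).2 (ae_of_all _ hnonneg)),
    integral_Icc_eq_integral_Ioc, ← intervalIntegral.integral_of_le hR.le,
    intervalIntegral.integral_div,
    intervalIntegral.integral_eq_sub_of_hasDerivAt hderiv (hcont.intervalIntegrable 0 R)]
  simp [hD.ne']

theorem ofReal_hrgPDF (α R : ℝ) (p : ℝ × ℝ) :
    ENNReal.ofReal (hrgPDF α R p) =
      (Set.Ico 0 (2 * π)).indicator (fun _ => ENNReal.ofReal (1 / (2 * π))) p.1 *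
        (Set.Icc 0 R).indicator
          (fun r => ENNReal.ofReal (α * sinh (α * r) / (cosh (α * R) - 1))) p.2 := by
  simp only [hrgPDF, Set.indicator, Set.mem_Ico, Set.mem_Icc]
  split_ifs <;> first
    | tauto
    | rw [ENNReal.ofReal_mul (by positivity)]
    | simp

theorem hrgMeasure_fst_preimage {α R : ℝ} (hα : 0 < α) (hR : 0 < R) {T : Set ℝ}
    (hT : MeasurableSet T) :
    hrgMeasure α R (Prod.fst ⁻¹' T) =
      ENNReal.ofReal (1 / (2 * π)) * volume (T ∩ Set.Ico 0 (2 * π)) := by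
  rw [hrgMeasure, withDensity_apply _ (measurable_fst hT), ← Set.prod_univ,
    Measure.volume_eq_prod, ← Measure.prod_restrict, Measure.restrict_univ]
  simp_rw [ofReal_hrgPDF]
  rw [lintegral_prod_mul ((measurable_const.indicator measurableSet_Ico).aemeasurable)
      ((Measurable.indicator (by fun_prop) measurableSet_Icc).aemeasurable),
    lintegral_indicator measurableSet_Icc, lintegral_radial_density hα hR, mul_one,
    lintegral_indicator measurableSet_Ico, setLIntegral_const, Measure.restrict_apply measurableSet_Ico, Set.inter_comm]

theorem hrgMeasure_sector_le {α R : ℝ} (hα : 0 < α) (hR : 0 < R) {n' : ℕ} [NeZero n']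
    (c : ZMod n') :
    hrgMeasure α R (Prod.fst ⁻¹' {φ | sectorIdx n' φ = c}) ≤ ENNReal.ofReal (1 / n') := by
  have hn' : (0 : ℝ) < n' := by exact_mod_cast Nat.pos_of_neZero n'
  rw [hrgMeasure_fst_preimage hα hR (measurableSet_sectorIdx_eq n' c)]
  calc _ ≤ ENNReal.ofReal (1 / (2 * π)) *
        volume (Set.Ico (2 * π * c.val / n') (2 * π * c.val / n' + 2 * π / n')) := by
        gcongr; exact setOf_sectorIdx_eq_inter_Ico_subset c
    _ = ENNReal.ofReal (1 / n') := by
        rw [Real.volume_Ico, ← ENNReal.ofReal_mul (by positivity)]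
        congr 1; field_simp; ring

theorem hrgMeasure_window_le {α R : ℝ} (hα : 0 < α) (hR : 0 < R) {n' : ℕ} [NeZero n']
    (j : ZMod n') (ℓ : ℕ) :
    hrgMeasure α R {p | ∃ t : ℕ, t < ℓ ∧ sectorIdx n' p.1 = j + t} ≤
      ENNReal.ofReal (ℓ / n') := by
  have hunion : {p : ℝ × ℝ | ∃ t : ℕ, t < ℓ ∧ sectorIdx n' p.1 = j + t} =
      ⋃ t ∈ Finset.range ℓ, Prod.fst ⁻¹' {φ | sectorIdx n' φ = j + t} := by
    ext p; simp
  calc _ ≤ ∑ t ∈ Finset.range ℓ, hrgMeasure α R (Prod.fst ⁻¹' {φ | sectorIdx n' φ = j + t}) :=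
        hunion ▸ measure_biUnion_finset_le _ _
    _ ≤ ∑ _t ∈ Finset.range ℓ, ENNReal.ofReal (1 / n') :=
        Finset.sum_le_sum fun t _ => hrgMeasure_sector_le hα hR _
    _ = ENNReal.ofReal (ℓ / n') := by
        rw [Finset.sum_const, Finset.card_range, nsmul_eq_mul, ← ENNReal.ofReal_natCast,
          ← ENNReal.ofReal_mul (by positivity), mul_one_div]

theorem IsHRG.measure_le_ptsInWindow_le {α C : ℝ} {n : ℕ} {Ω : Type*} [MeasurableSpace Ω]
    {μ : Measure Ω} {pts : Fin n → Ω → ℝ × ℝ} (h : IsHRG α C n μ pts) (hα : 0 < α)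
    (hR : 0 < bigR C n) {n' : ℕ} [NeZero n'] (j : ZMod n') (ℓ k : ℕ) :
    μ {ω | k ≤ ptsInWindow n' (fun i => (pts i ω).1) j ℓ} ≤
      n.choose k * ENNReal.ofReal (ℓ / n') ^ k := by
  set B := {p : ℝ × ℝ | ∃ t : ℕ, t < ℓ ∧ sectorIdx n' p.1 = j + t}
  have hB : MeasurableSet B := by
    simp only [B, Set.ofPred_exists, Set.ofPred_and]
    exact .iUnion fun t => (MeasurableSet.const _).inter
      (measurable_fst (measurableSet_sectorIdx_eq n' _))
  have hlaw : ∀ i, μ (pts i ⁻¹' B) ≤ ENNReal.ofReal (ℓ / n') := fun i => by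
    rw [← Measure.map_apply (h.meas i) hB, h.law i]
    exact hrgMeasure_window_le hα hR j ℓ
  have := measure_le_card_le_choose_mul_pow h.indep hB hlaw k
  rwa [Fintype.card_fin] at this

theorem sq_le_of_cos_eq_one_sub {θ y : ℝ} (h0 : 0 ≤ θ) (hπ : θ ≤ π) (hcos : cos θ = 1 - y)
    (hy : y ≤ 1 / 500) : θ ^ 2 ≤ 25 / 12 * y := by
  have hπsq : π ^ 2 ≤ 10 := by nlinarith [pi_lt_d2, pi_pos]
  -- Jordan's inequality makes `θ` small enough for the fourth-order Taylor bound to be sharp.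
  have hjordan := cos_le_one_sub_mul_cos_sq (abs_le.2 ⟨by linarith [pi_pos], hπ⟩)
  rw [hcos] at hjordan
  have hθsq : θ ^ 2 ≤ 1 / 100 := by
    have : 2 / π ^ 2 * θ ^ 2 ≤ y := by linarith
    rw [div_mul_eq_mul_div, div_le_iff₀ (by positivity)] at this
    nlinarith [sq_nonneg θ]
  have hθ1 : |θ| ≤ 1 := by rw [abs_of_nonneg h0]; nlinarith
  have htaylor := (abs_le.1 (cos_bound hθ1)).2
  rw [hcos, abs_of_nonneg h0] at htaylor
  nlinarith [sq_nonneg θ]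

theorem arccos_adjacency_mem_Ioc {R ρ : ℝ} (hR : 0 < R) (hsmall : exp (R / 2 - ρ) ≤ 1 / 36) :
    arccos ((cosh ρ ^ 2 - cosh R) / sinh ρ ^ 2) ∈ Set.Ioc 0 (7 / 3 * exp (R / 2 - ρ)) := by
  set E := exp (R / 2 - ρ)
  have hE : 0 < E := exp_pos _
  have hexpρ : 36 ≤ exp ρ := by
    have hprod : exp ρ * E = exp (R / 2) := by rw [← exp_add]; ring_nf
    nlinarith [exp_pos ρ, hprod ▸ one_le_exp (by positivity : 0 ≤ R / 2)]
  have hsinh : 9 / 20 * exp ρ ≤ sinh ρ := by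
    have : exp (-ρ) ≤ exp ρ / 10 := by
      rw [exp_neg, inv_le_iff_one_le_mul₀ (exp_pos ρ)]; nlinarith
    rw [sinh_eq]; linarith
  have hcosh : cosh R - 1 ≤ exp R / 2 := by
    rw [cosh_eq]; linarith [exp_le_one_iff.2 (neg_nonpos.2 hR.le)]
  have hE2 : E ^ 2 * exp ρ ^ 2 = exp R := by
    rw [← exp_nat_mul, ← exp_nat_mul, ← exp_add]; ring_nf
  set y := (cosh R - 1) / sinh ρ ^ 2
  have hy0 : 0 < y := div_pos (sub_pos.2 (one_lt_cosh.2 hR.ne')) (by nlinarith)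
  have hyE : y ≤ 200 / 81 * E ^ 2 := by
    rw [div_le_iff₀ (by nlinarith)]
    nlinarith [pow_le_pow_left₀ (by positivity) hsinh 2]
  have hx : (cosh ρ ^ 2 - cosh R) / sinh ρ ^ 2 = 1 - y := by
    have : sinh ρ ≠ 0 := by nlinarith
    simp only [y]; rw [cosh_sq' ρ]; field_simp; ring
  rw [hx]
  have hcos : cos (arccos (1 - y)) = 1 - y := cos_arccos (by nlinarith) (by linarith)
  have hθsq := sq_le_of_cos_eq_one_sub (arccos_nonneg _) (arccos_le_pi _) hcos (by nlinarith)
  refine ⟨arccos_pos.2 (by linarith), ?_⟩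
  nlinarith [arccos_nonneg (1 - y)]

theorem exp_half_bigR_sub_rho {C τ : ℝ} {n : ℕ} (hn : 0 < n) (hγ : 0 < gam n τ) :
    exp (bigR C n / 2 - rho C τ n) = π * gam n τ / (2 * n) := by
  have hn' : (0 : ℝ) < n := by exact_mod_cast hn
  rw [rho, show ∀ a b : ℝ, a / 2 - (a - b) = b - a / 2 by intros; ring, exp_sub,
    exp_log (by positivity), bigR, show (2 * log n + C) / 2 = log n + C / 2 by ring, exp_add,
    exp_log hn']
  field_simp

theorem theta_mem_Ioc {C τ : ℝ} {n : ℕ} (hγ : 0 < gam n τ) (hR : 0 < bigR C n)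
    (hγn : 100 * gam n τ ≤ n) : theta C τ n ∈ Set.Ioc 0 (7 / 6 * π * gam n τ / n) := by
  have hn : 0 < n := by exact_mod_cast (by linarith : (0 : ℝ) < n)
  have hE := exp_half_bigR_sub_rho (C := C) hn hγ
  have hsmall : exp (bigR C n / 2 - rho C τ n) ≤ 1 / 36 := by
    rw [hE, div_le_iff₀ (by positivity)]; nlinarith [pi_lt_d2]
  have := arccos_adjacency_mem_Ioc hR hsmall
  rw [hE, show 7 / 3 * (π * gam n τ / (2 * n)) = 7 / 6 * π * gam n τ / n by ring] at this
  exact this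

theorem le_nSec {C τ : ℝ} {n : ℕ} (hγ : 0 < gam n τ) (hR : 0 < bigR C n)
    (hγn : 100 * gam n τ ≤ n) : 5 / 3 * (n / gam n τ) ≤ nSec C τ n := by
  obtain ⟨hθ0, hθ⟩ := theta_mem_Ioc hγ hR hγn
  have hn : (0 : ℝ) < n := by linarith
  have h100 : 100 ≤ n / gam n τ := by rw [le_div_iff₀ hγ]; linarith
  have hX : 12 / 7 * (n / gam n τ) ≤ 2 * π / theta C τ n := by
    rw [le_div_iff₀ hθ0]
    calc 12 / 7 * (n / gam n τ) * theta C τ n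
        ≤ 12 / 7 * (n / gam n τ) * (7 / 6 * π * gam n τ / n) := by gcongr
      _ = 2 * π := by field_simp; ring
  have := Nat.sub_one_lt_floor (2 * π / theta C τ n)
  rw [nSec]
  linarith

theorem div_nSec_le {C τ : ℝ} {n : ℕ} (hγ : 0 < gam n τ) (hR : 0 < bigR C n)
    (hγn : 100 * gam n τ ≤ n) : (n : ℝ) / nSec C τ n ≤ 3 / 5 * gam n τ := by
  have hn : (0 : ℝ) < n := by linarith
  have hn'_ge := le_nSec hγ hR hγn
  rw [div_le_iff₀ ((by positivity : (0 : ℝ) < 5 / 3 * (n / gam n τ)).trans_le hn'_ge)]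
  calc (n : ℝ) = 3 / 5 * gam n τ * (5 / 3 * (n / gam n τ)) := by field_simp
    _ ≤ 3 / 5 * gam n τ * nSec C τ n := by gcongr

theorem tendsto_loglog_atTop : Tendsto loglog atTop atTop :=
  tendsto_log_atTop.comp (tendsto_log_atTop.comp tendsto_natCast_atTop_atTop)

theorem tendsto_logloglog_atTop : Tendsto logloglog atTop atTop :=
  tendsto_log_atTop.comp tendsto_loglog_atTop

theorem tendsto_bigR_atTop (C : ℝ) : Tendsto (bigR C) atTop atTop :=
  tendsto_atTop_add_const_right _ C <|
    (tendsto_log_atTop.comp tendsto_natCast_atTop_atTop).const_mul_atTop two_pos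

theorem eventually_gam_pos {τ : ℝ} (hτ : 0 < τ) : ∀ᶠ n : ℕ in atTop, 0 < gam n τ := by
  filter_upwards [tendsto_loglog_atTop.eventually_gt_atTop 0,
    tendsto_logloglog_atTop.eventually_gt_atTop 0,
    ((tendsto_exp_div_pow_atTop 2).comp tendsto_logloglog_atTop).eventually_gt_atTop (2 / τ)]
    with n hL2 hL3 hgrowth
  have hexp : exp (logloglog n) = loglog n := exp_log hL2
  rw [Function.comp_apply, hexp, div_lt_div_iff₀ hτ (by positivity)] at hgrowth
  exact log_pos ((one_lt_div (by positivity)).2 (by linarith))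

theorem eventually_gam_le_logloglog {τ : ℝ} (hτ : 0 < τ) :
    ∀ᶠ n : ℕ in atTop, gam n τ ≤ logloglog n := by
  filter_upwards [tendsto_loglog_atTop.eventually_gt_atTop 0,
    tendsto_logloglog_atTop.eventually_ge_atTop (τ + 1)] with n hL2 hL3
  have hL3pos : 0 < logloglog n := by linarith
  show log (τ * loglog n / (2 * logloglog n ^ 2)) ≤ log (loglog n)
  refine log_le_log (by positivity) ?_
  have hτL3 : τ ≤ 2 * logloglog n ^ 2 := by nlinarith
  rw [div_le_iff₀ (by positivity)]
  nlinarith [mul_le_mul_of_nonneg_left hτL3 hL2.le]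

theorem eventually_hundred_mul_gam_le {τ : ℝ} (hτ : 0 < τ) :
    ∀ᶠ n : ℕ in atTop, 100 * gam n τ ≤ n := by
  filter_upwards [eventually_gam_le_logloglog hτ, tendsto_loglog_atTop.eventually_ge_atTop 0,
    tendsto_natCast_atTop_atTop.eventually
      (isLittleO_log_id_atTop.bound (by norm_num : (0 : ℝ) < 1 / 100))] with n hγ hL2 hlog
  have hL3 : logloglog n ≤ loglog n := log_le_self hL2
  have hL2' : loglog n ≤ log n := log_le_self (log_natCast_nonneg n)
  simp only [norm_eq_abs, id, Nat.abs_cast] at hlog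
  linarith [le_abs_self (log n)]

theorem wThr_mul_gam_le {τ : ℝ} {n : ℕ} (hτ : 0 < τ) (hL2 : 0 < loglog n)
    (hγ : 0 < gam n τ) (hγL3 : gam n τ ≤ logloglog n) :
    wThr n τ * gam n τ ≤ τ * loglog n / 2 := by
  have hL3 : 0 < logloglog n := hγ.trans_le hγL3
  have hexp : exp (gam n τ) = τ * loglog n / (2 * logloglog n ^ 2) := exp_log (by positivity)
  calc wThr n τ * gam n τ ≤ wThr n τ * logloglog n := by gcongr; rw [wThr]; positivity
    _ = τ * loglog n / 2 := by rw [wThr, hexp]; field_simp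

theorem narrow_run_vertex_count_tail_general
    (α C τ : ℝ) (hα : α ∈ Set.Ioo (1 / 2 : ℝ) 1) (hτ : 0 < τ)
    (Ω : ℕ → Type) (mΩ : ∀ n, MeasurableSpace (Ω n))
    (μ : ∀ n, Measure (Ω n))
    (pts : ∀ n, Fin n → Ω n → ℝ × ℝ)
    (hhrg : ∀ n, IsHRG α C n (μ n) (pts n)) :
    ∀ᶠ n : ℕ in atTop, ∀ (j : ZMod (nSec C τ n)) (ℓ : ℕ), (ℓ : ℝ) ≤ wThr n τ →
      ∀ k : ℕ, τ * loglog n < (k : ℝ) →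
        ((μ n) {ω |
            ptsInWindow (nSec C τ n) (fun i => (pts n i ω).1) j ℓ = k}).toReal ≤
          Real.exp (-(k : ℝ) / 18) := by
  filter_upwards [tendsto_loglog_atTop.eventually_gt_atTop 0, eventually_gam_pos hτ,
    eventually_gam_le_logloglog hτ, eventually_hundred_mul_gam_le hτ,
    (tendsto_bigR_atTop C).eventually_gt_atTop 0] with n hL2 hγ hγL3 hγn hR
  set n' := nSec C τ n
  have hn : (0 : ℝ) < n := by linarith
  have hn' : (0 : ℝ) < n' :=
    (by positivity : (0 : ℝ) < 5 / 3 * (n / gam n τ)).trans_le (le_nSec hγ hR hγn)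
  have : NeZero n' := ⟨by exact_mod_cast hn'.ne'⟩
  intro j ℓ hℓ k hk
  have hnp : n * (ℓ / n' : ℝ) ≤ k / 3 := by
    calc n * (ℓ / n' : ℝ) = ℓ * (n / n') := by ring
      _ ≤ wThr n τ * (3 / 5 * gam n τ) := by
          gcongr
          · exact (Nat.cast_nonneg ℓ).trans hℓ
          · exact div_nSec_le hγ hR hγn
      _ ≤ 3 / 5 * (τ * loglog n / 2) := by nlinarith [wThr_mul_gam_le hτ hL2 hγ hγL3]
      _ ≤ k / 3 := by linarith
  have hprob := (measure_mono fun ω (h : _ = k) => h.ge).trans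
    ((hhrg n).measure_le_ptsInWindow_le (lt_trans one_half_pos hα.1) hR j ℓ k)
  calc _ ≤ ((n.choose k : ℝ≥0∞) * ENNReal.ofReal (ℓ / n') ^ k).toReal :=
        ENNReal.toReal_mono (by finiteness) hprob
    _ = n.choose k * (ℓ / n' : ℝ) ^ k := by
        rw [ENNReal.toReal_mul, ENNReal.toReal_pow, ENNReal.toReal_ofReal (by positivity)]; simp
    _ ≤ exp (-k / 18) := choose_mul_pow_le_exp_neg (by positivity) hnp

/-- **Tail bound for the number of vertices in a narrow run.**
For a family of hyperbolic random graphs on `n` vertices with parameters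
`α ∈ (1/2,1)`, `C`, and fixed `τ > 0`: for all sufficiently large `n`, for every fixed
angular interval `I` made of at most `w = e^{γ}·log^{(3)} n` consecutive sectors and
every integer `k > τ·log^{(2)}(n)`, the probability that exactly `k` of the `n` sampled
points have angular coordinate in `I` is at most `e^{−k/18}`. -/
theorem narrow_run_vertex_count_tail
    (α C τ : ℝ) (hα : α ∈ Set.Ioo (1 / 2 : ℝ) 1) (hτ : 0 < τ)
    (Ω : ℕ → Type) (mΩ : ∀ n, MeasurableSpace (Ω n))
    (μ : ∀ n, Measure (Ω n)) (hμ : ∀ n, IsProbabilityMeasure (μ n))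
    (pts : ∀ n, Fin n → Ω n → ℝ × ℝ)
    (hhrg : ∀ n, IsHRG α C n (μ n) (pts n)) :
    ∀ᶠ n : ℕ in atTop, ∀ (j : ZMod (nSec C τ n)) (ℓ : ℕ), (ℓ : ℝ) ≤ wThr n τ →
      ∀ k : ℕ, τ * loglog n < (k : ℝ) →
        ((μ n) {ω |
            ptsInWindow (nSec C τ n) (fun i => (pts n i ω).1) j ℓ = k}).toReal ≤
          Real.exp (-(k : ℝ) / 18) :=
  narrow_run_vertex_count_tail_general α C τ hα hτ Ω mΩ μ pts hhrg
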